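/- (Gyrocentre Liouville theorem, division-free form.) Let m, q be nonzero reals, let b̂₀, A₀, w₀ : ℝ³ → ℝ³ be twice continuously differentiable, let A₁ : ℝ³ × ℝ × ℝ → ℝ³, (r, μ, t) ↦ A₁(r, μ, t), be twice continuously differentiable, and let H : ℝ³ × ℝ × ℝ × ℝ → ℝ, (r, u∥, μ, t) ↦ H(r, u∥, μ, t), be twice continuously differentiable. Define A*(r, u∥, μ, t) := A₀(r) + (m u∥/q) b̂₀(r) − (m μ/q²) w₀(r) + A₁(r, μ, t), B* := ∇_r × A*, and B∥* := b̂₀ · B*. Then at every point of ℝ³ × ℝ × ℝ × ℝ: ∂_t B∥* + ∇_r · [ (1/m)(∂H/∂u∥) B* + (1/q) b̂₀ × (∇_r H + q ∂_t A₁) ] + ∂/∂u∥ [ −(1/m) B* · (∇_r H + q ∂_t A₁) ] = 0. In other words, the phase-space Jacobian B∥*/m satisfies the continuity equation ∂_t J + ∇·(J Ṙ) + ∂_{u∥}(J U̇∥) = 0 for the gyrocentre equations of motion Ṙ = (1/(m B∥*))(∂H/∂u∥)B* + (1/(q B∥*)) b̂₀ × (∇H + q ∂_t A₁) and U̇∥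 = −(1/(m B∥*)) B* · (∇H + q ∂_t A₁), wherever B∥* ≠ 0. -/

import Mathlib

open Matrix

/-- The partial derivative `∂f/∂rᵢ`. -/
noncomputable def pd (i : Fin 3) (f : (Fin 3 → ℝ) → ℝ) (r : Fin 3 → ℝ) : ℝ :=
  fderiv ℝ f r (Pi.single i 1)

/-- The gradient `∇f` of a scalar field on ℝ³. -/
noncomputable def grad (f : (Fin 3 → ℝ) → ℝ) (r : Fin 3 → ℝ) : Fin 3 → ℝ :=
  fun i => pd i f r

/-- The divergence `∇·F` of a vector field on ℝ³. -/
noncomputable def divg (F : (Fin 3 → ℝ) → Fin 3 → ℝ) (r : Fin 3 → ℝ) : ℝ :=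
  ∑ i, pd i (fun x => F x i) r

/-- The curl `∇ × F` of a vector field on ℝ³. -/
noncomputable def curl (F : (Fin 3 → ℝ) → Fin 3 → ℝ) (r : Fin 3 → ℝ) : Fin 3 → ℝ :=
  ![pd 1 (fun x => F x 2) r - pd 2 (fun x => F x 1) r,
    pd 2 (fun x => F x 0) r - pd 0 (fun x => F x 2) r,
    pd 0 (fun x => F x 1) r - pd 1 (fun x => F x 0) r]

/-!
With `G = ∇H + q ∂ₜA₁`, the field `B* = ∇×A₀ + (m u∥/q) ∇×b̂₀ - (mμ/q²) ∇×w₀ + ∇×A₁` depends on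
`t` only through `A₁` and is affine in `u∥` with slope `(m/q) ∇×b̂₀`; since all fields are `C²`,
`∂ₜ` and `∂_{u∥}` commute with `∇` and `∇×`. Hence the three terms are
`b̂₀ · ∇×∂ₜA₁`, `(1/m) ∇(∂_{u∥}H) · B* + (1/q) (G · ∇×b̂₀ - q b̂₀ · ∇×∂ₜA₁)` (using `∇·B* = 0`,
`∇×∇H = 0` and `∇·(b × G) = G·∇×b - b·∇×G`), and `-(1/q) G · ∇×b̂₀ - (1/m) B* · ∇(∂_{u∥}H)`,
which cancel.
-/

section SecondDerivative
variable {E F : Type*} [NormedAddCommGroup E] [NormedSpace ℝ E]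
  [NormedAddCommGroup F] [NormedSpace ℝ F] {f : E → F}

theorem contDiff_fderiv_right_apply {n : WithTop ℕ∞} (hf : ContDiff ℝ (n + 1) f) (v : E) :
    ContDiff ℝ n fun x => fderiv ℝ f x v :=
  (hf.fderiv_right le_rfl).clm_apply contDiff_const

theorem fderiv_fderiv_apply_comm (hf : ContDiff ℝ 2 f) (p v w : E) :
    fderiv ℝ (fun x => fderiv ℝ f x v) p w = fderiv ℝ (fun x => fderiv ℝ f x w) p v := by
  have hd : DifferentiableAt ℝ (fderiv ℝ f) p :=
    (hf.fderiv_right (m := 1) le_rfl).differentiable one_ne_zero p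
  simp only [fderiv_clm_apply hd (differentiableAt_const _), fderiv_fun_const, Pi.zero_apply,
    ContinuousLinearMap.comp_zero, zero_add, ContinuousLinearMap.flip_apply]
  exact (hf.contDiffAt.isSymmSndFDerivAt (by simp)).eq w v

end SecondDerivative

section VectorCalculus
variable {f g : (Fin 3 → ℝ) → ℝ} {F G : (Fin 3 → ℝ) → Fin 3 → ℝ} {r : Fin 3 → ℝ} {i : Fin 3}

theorem pd_add (hf : DifferentiableAt ℝ f r) (hg : DifferentiableAt ℝ g r) :
    pd i (fun x => f x + g x) r = pd i f r + pd i g r := by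
  simp [pd, fderiv_fun_add hf hg]

theorem pd_sub (hf : DifferentiableAt ℝ f r) (hg : DifferentiableAt ℝ g r) :
    pd i (fun x => f x - g x) r = pd i f r - pd i g r := by
  simp [pd, fderiv_fun_sub hf hg]

theorem pd_const_mul (c : ℝ) (hf : DifferentiableAt ℝ f r) :
    pd i (fun x => c * f x) r = c * pd i f r := by
  simp [pd, fderiv_const_mul hf c]

theorem pd_mul (hf : DifferentiableAt ℝ f r) (hg : DifferentiableAt ℝ g r) :
    pd i (fun x => f x * g x) r = pd i f r * g r + f r * pd i g r := by
  simp only [pd, fderiv_fun_mul hf hg, _root_.add_apply, _root_.smul_apply, smul_eq_mul]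
  ring

theorem pd_comm (hf : ContDiff ℝ 2 f) (i j : Fin 3) : pd i (pd j f) r = pd j (pd i f) r :=
  fderiv_fderiv_apply_comm hf r _ _

theorem contDiff_pd {n : WithTop ℕ∞} (hf : ContDiff ℝ (n + 1) f) (i : Fin 3) :
    ContDiff ℝ n (pd i f) :=
  contDiff_fderiv_right_apply hf _

theorem contDiff_grad {n : WithTop ℕ∞} (hf : ContDiff ℝ (n + 1) f) : ContDiff ℝ n (grad f) :=
  contDiff_pi.2 (contDiff_pd hf)

theorem contDiff_curl {n : WithTop ℕ∞} (hF : ContDiff ℝ (n + 1) F) : ContDiff ℝ n (curl F) := by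
  have h (i j : Fin 3) : ContDiff ℝ n (pd i fun x => F x j) := contDiff_pd (contDiff_pi.1 hF j) i
  refine contDiff_pi.2 fun k => ?_
  fin_cases k
  exacts [(h 1 2).sub (h 2 1), (h 2 0).sub (h 0 2), (h 0 1).sub (h 1 0)]

theorem grad_const_mul (c : ℝ) (hf : DifferentiableAt ℝ f r) :
    grad (fun x => c * f x) r = c • grad f r :=
  funext fun _ => pd_const_mul c hf

theorem curl_add (hF : DifferentiableAt ℝ F r) (hG : DifferentiableAt ℝ G r) :
    curl (fun x => F x + G x) r = curl F r + curl G r := by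
  have hF' := differentiableAt_pi.1 hF
  have hG' := differentiableAt_pi.1 hG
  ext k
  fin_cases k <;>
    simp only [curl, Pi.add_apply, pd_add (hF' _) (hG' _), Fin.isValue, Fin.zero_eta, Fin.mk_one,
      Fin.reduceFinMk, cons_val_zero, cons_val_one, cons_val] <;>
    ring

theorem curl_sub (hF : DifferentiableAt ℝ F r) (hG : DifferentiableAt ℝ G r) :
    curl (fun x => F x - G x) r = curl F r - curl G r := by
  have hF' := differentiableAt_pi.1 hF
  have hG' := differentiableAt_pi.1 hG
  ext k
  fin_cases k <;>
    simp only [curl, Pi.sub_apply, pd_sub (hF' _) (hG' _), Fin.isValue, Fin.zero_eta, Fin.mk_one,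
      Fin.reduceFinMk, cons_val_zero, cons_val_one, cons_val] <;>
    ring

theorem curl_const_smul (c : ℝ) (hF : DifferentiableAt ℝ F r) :
    curl (fun x => c • F x) r = c • curl F r := by
  have hF' := differentiableAt_pi.1 hF
  ext k
  fin_cases k <;>
    simp only [curl, Pi.smul_apply, smul_eq_mul, pd_const_mul c (hF' _), Fin.isValue, Fin.zero_eta,
      Fin.mk_one, Fin.reduceFinMk, cons_val_zero, cons_val_one, cons_val] <;>
    ring

theorem curl_grad (hf : ContDiff ℝ 2 f) : curl (grad f) r = 0 := by
  ext k; fin_cases k <;> simp [curl, grad, pd_comm hf 0 1, pd_comm hf 0 2, pd_comm hf 1 2]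

theorem divg_curl (hF : ContDiff ℝ 2 F) : divg (curl F) r = 0 := by
  have hF' (j : Fin 3) : ContDiff ℝ 2 fun x => F x j := contDiff_pi.1 hF j
  have hd (i j : Fin 3) : DifferentiableAt ℝ (pd i fun x => F x j) r :=
    (contDiff_pd (n := 1) (hF' j) i).differentiable one_ne_zero r
  simp [divg, curl, Fin.sum_univ_three, pd_sub (hd _ _) (hd _ _), pd_comm (hF' 0) 1 2,
    pd_comm (hF' 1) 0 2, pd_comm (hF' 2) 0 1]

theorem divg_add (hF : DifferentiableAt ℝ F r) (hG : DifferentiableAt ℝ G r) :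
    divg (fun x => F x + G x) r = divg F r + divg G r := by
  simp [divg, pd_add (differentiableAt_pi.1 hF _) (differentiableAt_pi.1 hG _),
    Finset.sum_add_distrib]

theorem divg_const_smul (c : ℝ) (hF : DifferentiableAt ℝ F r) :
    divg (fun x => c • F x) r = c * divg F r := by
  simp [divg, pd_const_mul c (differentiableAt_pi.1 hF _), Finset.mul_sum]

theorem divg_smul (hf : DifferentiableAt ℝ f r) (hF : DifferentiableAt ℝ F r) :
    divg (fun x => f x • F x) r = grad f r ⬝ᵥ F r + f r * divg F r := by
  simp [divg, grad, dotProduct, pd_mul hf (differentiableAt_pi.1 hF _), Finset.sum_add_distrib,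
    Finset.mul_sum]

@[fun_prop]
theorem DifferentiableAt.crossProduct (hF : DifferentiableAt ℝ F r)
    (hG : DifferentiableAt ℝ G r) : DifferentiableAt ℝ (fun x => F x ⨯₃ G x) r := by
  have hF' := differentiableAt_pi.1 hF
  have hG' := differentiableAt_pi.1 hG
  refine differentiableAt_pi.2 fun k => ?_
  fin_cases k <;>
    simp only [cross_apply, Fin.isValue, Fin.zero_eta, Fin.mk_one, Fin.reduceFinMk, cons_val] <;>
    fun_prop

theorem divg_crossProduct (hF : DifferentiableAt ℝ F r) (hG : DifferentiableAt ℝ G r) :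
    divg (fun x => F x ⨯₃ G x) r = G r ⬝ᵥ curl F r - F r ⬝ᵥ curl G r := by
  have hF' := differentiableAt_pi.1 hF
  have hG' := differentiableAt_pi.1 hG
  simp only [divg, curl, dotProduct, Fin.sum_univ_three, cross_apply, Fin.isValue, cons_val_zero,
    cons_val_one, cons_val, pd_sub, pd_mul, hF', hG', DifferentiableAt.fun_mul]
  ring

end VectorCalculus

section Parametric
variable {X E : Type*} [NormedAddCommGroup X] [NormedSpace ℝ X]
  [NormedAddCommGroup E] [NormedSpace ℝ E]

theorem hasDerivAt_param {F : X × ℝ → E} {x : X} {s : ℝ}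
    (hF : DifferentiableAt ℝ F (x, s)) :
    HasDerivAt (fun s' => F (x, s')) (fderiv ℝ F (x, s) (0, 1)) s :=
  hF.hasFDerivAt.comp_hasDerivAt s ((hasDerivAt_const s x).prodMk (hasDerivAt_id s))

theorem pd_param {f : (Fin 3 → ℝ) × ℝ → ℝ} {r : Fin 3 → ℝ} {s : ℝ}
    (hf : DifferentiableAt ℝ f (r, s)) (i : Fin 3) :
    pd i (fun x => f (x, s)) r = fderiv ℝ f (r, s) (Pi.single i 1, 0) := by
  have h : HasFDerivAt (fun x : Fin 3 → ℝ => (x, s))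
      ((ContinuousLinearMap.id ℝ (Fin 3 → ℝ)).prod 0) r :=
    (hasFDerivAt_id r).prodMk (hasFDerivAt_const s r)
  have hfs : HasFDerivAt (fun x => f (x, s)) _ r := hf.hasFDerivAt.comp r h
  rw [pd, hfs.fderiv]
  rfl

theorem contDiff_deriv_param {n : WithTop ℕ∞} {F : X × ℝ → E}
    (hF : ContDiff ℝ (n + 1) F) (s : ℝ) :
    ContDiff ℝ n fun x => deriv (fun s' => F (x, s')) s := by
  have hd := hF.differentiable (by simp)
  simp only [fun x => (hasDerivAt_param (hd (x, s))).deriv]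
  exact (contDiff_fderiv_right_apply hF (0, 1)).comp (contDiff_id.prodMk contDiff_const)

theorem hasDerivAt_pd_param {f : (Fin 3 → ℝ) × ℝ → ℝ} (hf : ContDiff ℝ 2 f) (i : Fin 3)
    (r : Fin 3 → ℝ) (s : ℝ) :
    HasDerivAt (fun s' => pd i (fun x => f (x, s')) r)
      (pd i (fun x => deriv (fun s' => f (x, s')) s) r) s := by
  have hd := hf.differentiable two_ne_zero
  have hd' (v : (Fin 3 → ℝ) × ℝ) : Differentiable ℝ fun z => fderiv ℝ f z v :=
    (contDiff_fderiv_right_apply (n := 1) hf v).differentiable one_ne_zero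
  simp only [pd_param (hd _), fun x => (hasDerivAt_param (hd (x, s))).deriv]
  rw [pd_param (hd' _ _), ← fderiv_fderiv_apply_comm hf]
  exact hasDerivAt_param (hd' _ _)

theorem hasDerivAt_grad_param {f : (Fin 3 → ℝ) × ℝ → ℝ} (hf : ContDiff ℝ 2 f)
    (r : Fin 3 → ℝ) (s : ℝ) :
    HasDerivAt (fun s' => grad (fun x => f (x, s')) r)
      (grad (fun x => deriv (fun s' => f (x, s')) s) r) s :=
  hasDerivAt_pi.2 fun i => hasDerivAt_pd_param hf i r s

theorem hasDerivAt_curl_param {F : (Fin 3 → ℝ) × ℝ → Fin 3 → ℝ} (hF : ContDiff ℝ 2 F)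
    (r : Fin 3 → ℝ) (s : ℝ) :
    HasDerivAt (fun s' => curl (fun x => F (x, s')) r)
      (curl (fun x => deriv (fun s' => F (x, s')) s) r) s := by
  have hF' (j : Fin 3) : ContDiff ℝ 2 fun z => F z j := contDiff_pi.1 hF j
  have hd (x : Fin 3 → ℝ) : DifferentiableAt ℝ (fun s' => F (x, s')) s :=
    (hasDerivAt_param ((hF.differentiable two_ne_zero) (x, s))).differentiableAt
  have hcomp (x : Fin 3 → ℝ) (j : Fin 3) :
      deriv (fun s' => F (x, s')) s j = deriv (fun s' => F (x, s') j) s := by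
    rw [deriv_pi (differentiableAt_pi.1 (hd x))]
  refine hasDerivAt_pi.2 fun k => ?_
  fin_cases k <;> simp only [curl, hcomp] <;>
    exact (hasDerivAt_pd_param (hF' _) _ r s).sub (hasDerivAt_pd_param (hF' _) _ r s)

end Parametric

theorem HasDerivAt.dotProduct {ι : Type*} [Fintype ι] {f g : ℝ → ι → ℝ} {f' g' : ι → ℝ}
    {s : ℝ} (hf : HasDerivAt f f' s) (hg : HasDerivAt g g' s) :
    HasDerivAt (fun s => f s ⬝ᵥ g s) (f' ⬝ᵥ g s + f s ⬝ᵥ g') s := by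
  simp only [_root_.dotProduct, ← Finset.sum_add_distrib]
  exact HasDerivAt.fun_sum fun i _ => (hasDerivAt_pi.1 hf i).mul (hasDerivAt_pi.1 hg i)

theorem divg_gyrocentre_flux {h f : (Fin 3 → ℝ) → ℝ} {B b E : (Fin 3 → ℝ) → Fin 3 → ℝ}
    {r : Fin 3 → ℝ} (hh : Differentiable ℝ h) (hB : Differentiable ℝ B) (hdivB : divg B r = 0)
    (hb : Differentiable ℝ b) (hf : ContDiff ℝ 2 f) (hE : Differentiable ℝ E) (c c' q : ℝ) :
    divg (fun x => (c * h x) • B x + c' • b x ⨯₃ (grad f x + q • E x)) r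
      = c * (grad h r ⬝ᵥ B r)
        + c' * ((grad f r + q • E r) ⬝ᵥ curl b r - q * (b r ⬝ᵥ curl E r)) := by
  have hgrad : Differentiable ℝ (grad f) := (contDiff_grad (n := 1) hf).differentiable one_ne_zero
  have hG : Differentiable ℝ fun x => grad f x + q • E x := hgrad.add (hE.const_smul q)
  rw [divg_add (by fun_prop) (by fun_prop), divg_smul (by fun_prop) (hB r),
    divg_const_smul _ (by fun_prop), divg_crossProduct (hb r) (hG r), grad_const_mul _ (hh r),
    hdivB, curl_add (G := fun x => q • E x) (hgrad r) ((hE r).const_smul q), curl_grad hf,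
    curl_const_smul q (hE r)]
  simp only [smul_dotProduct, dotProduct_smul, zero_add, mul_zero, add_zero, smul_eq_mul]

theorem gyrocentre_field_eq (m q : ℝ) (b0 A0 w0 : (Fin 3 → ℝ) → Fin 3 → ℝ)
    (hb0 : Differentiable ℝ b0) (hA0 : Differentiable ℝ A0) (hw0 : Differentiable ℝ w0)
    (A1 : (Fin 3 → ℝ) × ℝ × ℝ → Fin 3 → ℝ) (hA1 : Differentiable ℝ A1)
    (Astar : (Fin 3 → ℝ) → ℝ → ℝ → ℝ → Fin 3 → ℝ)
    (hAstar : ∀ r u μ t, Astar r u μ t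
      = A0 r + (m * u / q) • b0 r - (m * μ / q ^ 2) • w0 r + A1 (r, μ, t))
    (Bstar : (Fin 3 → ℝ) → ℝ → ℝ → ℝ → Fin 3 → ℝ)
    (hBstar : ∀ r u μ t, Bstar r u μ t = curl (fun x => Astar x u μ t) r) (r : Fin 3 → ℝ)
    (u μ t : ℝ) :
    Bstar r u μ t = curl A0 r + (m * u / q) • curl b0 r - (m * μ / q ^ 2) • curl w0 r
      + curl (fun x => A1 (x, μ, t)) r := by
  simp only [hBstar, hAstar]
  simp (disch := fun_prop) only [curl_add, curl_sub, curl_const_smul]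

/-- gyrocentre Liouville theorem, division-free form: the phase-space
Jacobian `B∥*` satisfies the continuity equation for the gyrocentre equations of
motion. -/
theorem gyrocentre_liouville
    (m q : ℝ) (hm : m ≠ 0) (hq : q ≠ 0)
    (b0 A0 w0 : (Fin 3 → ℝ) → Fin 3 → ℝ)
    (hb0 : ContDiff ℝ 2 b0) (hA0 : ContDiff ℝ 2 A0) (hw0 : ContDiff ℝ 2 w0)
    (A1 : (Fin 3 → ℝ) × ℝ × ℝ → Fin 3 → ℝ) (hA1 : ContDiff ℝ 2 A1)
    (H : (Fin 3 → ℝ) × ℝ × ℝ × ℝ → ℝ) (hH : ContDiff ℝ 2 H)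
    (Astar : (Fin 3 → ℝ) → ℝ → ℝ → ℝ → Fin 3 → ℝ)
    (hAstar : ∀ r u μ t, Astar r u μ t
      = A0 r + (m * u / q) • b0 r - (m * μ / q ^ 2) • w0 r + A1 (r, μ, t))
    (Bstar : (Fin 3 → ℝ) → ℝ → ℝ → ℝ → Fin 3 → ℝ)
    (hBstar : ∀ r u μ t, Bstar r u μ t = curl (fun x => Astar x u μ t) r) :
    ∀ (r : Fin 3 → ℝ) (u μ t : ℝ),
      deriv (fun t' => b0 r ⬝ᵥ Bstar r u μ t') t
      + divg (fun x =>
          ((1 / m) * deriv (fun u' => H (x, u', μ, t)) u) • Bstar x u μ t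
          + (1 / q) • crossProduct (b0 x)
              (grad (fun y => H (y, u, μ, t)) x
                + q • deriv (fun t' => A1 (x, μ, t')) t)) r
      + deriv (fun u' =>
          -(1 / m) * (Bstar r u' μ t ⬝ᵥ
            (grad (fun y => H (y, u', μ, t)) r
              + q • deriv (fun t' => A1 (r, μ, t')) t))) u
      = 0 := by
  intro r u μ t
  have hA : ContDiff ℝ 2 fun p : (Fin 3 → ℝ) × ℝ => A1 (p.1, μ, p.2) := hA1.comp (by fun_prop)
  have hHu : ContDiff ℝ 2 fun p : (Fin 3 → ℝ) × ℝ => H (p.1, p.2, μ, t) := hH.comp (by fun_prop)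
  have hAstar' : ContDiff ℝ 2 fun x => Astar x u μ t := by simp only [hAstar]; fun_prop
  have hB := gyrocentre_field_eq m q b0 A0 w0 (hb0.differentiable two_ne_zero)
    (hA0.differentiable two_ne_zero) (hw0.differentiable two_ne_zero) A1
    (hA1.differentiable two_ne_zero) Astar hAstar Bstar hBstar r
  have h_t : HasDerivAt (fun t' => b0 r ⬝ᵥ Bstar r u μ t')
      (b0 r ⬝ᵥ curl (fun x => deriv (fun t' => A1 (x, μ, t')) t) r) t := by
    simp only [hB]
    convert (hasDerivAt_const t (b0 r)).dotProduct
      ((hasDerivAt_curl_param hA r t).const_add _) using 1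
    rw [zero_dotProduct, zero_add]
  have hBu : HasDerivAt (fun u' => Bstar r u' μ t) ((m / q) • curl b0 r) u := by
    simp only [hB]
    have hlin : HasDerivAt (fun u' => m * u' / q) (m / q) u := by
      simpa using ((hasDerivAt_id u).const_mul m).div_const q
    exact (((hlin.smul_const (curl b0 r)).const_add _).sub_const _).add_const _
  have h_u := ((hBu.dotProduct ((hasDerivAt_grad_param hHu r u).add_const
    (q • deriv (fun t' => A1 (r, μ, t')) t))).const_mul (-(1 / m))).deriv
  have h_div := divg_gyrocentre_flux (h := fun x => deriv (fun u' => H (x, u', μ, t)) u)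
    (B := fun x => Bstar x u μ t) (f := fun y => H (y, u, μ, t))
    (E := fun x => deriv (fun t' => A1 (x, μ, t')) t)
    ((contDiff_deriv_param (n := 1) hHu u).differentiable one_ne_zero)
    (by simpa only [hBstar] using (contDiff_curl (n := 1) hAstar').differentiable one_ne_zero)
    (by simpa only [hBstar] using divg_curl (r := r) hAstar') (hb0.differentiable two_ne_zero)
    (hH.comp (by fun_prop : ContDiff ℝ 2 fun x => (x, u, μ, t)))
    ((contDiff_deriv_param (n := 1) hA t).differentiable one_ne_zero) (1 / m) (1 / q) q
  rw [h_t.deriv, h_div, h_u]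
  simp only [smul_dotProduct, smul_eq_mul, dotProduct_comm (curl b0 r),
    dotProduct_comm (Bstar r u μ t)]
  field_simp
  ring
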